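/- arXiv:1902.00935 — 2 statements merged into one kernel-verified Lean document; each statement's English description precedes it below -/
import Mathlib

section
/- Let 1 ≤ k ≤ n and m ≥ 0 be integers, and let α_1, …, α_m ∈ (ℤ/2)^k be sign patterns. Let f : V_{n,k} → ℝ^m be a continuous map that is equivariant in the sense that for every (x_1, …, x_k) ∈ V_{n,k}, every j ∈ {1, …, k}, and every i ∈ {1, …, m}, replacing x_j by -x_j multiplies the i-th coordinate f_i(x_1, …, x_k) by (-1)^{⟨α_i, ε_j⟩}. Then there exists a continuous map F : (S^{n-1})^k → ℝ^m with the same equivariance property (with respect to the componentwise antipodal actions on (S^{n-1})^k) such that F restricted to V_{n,k} equals f, and such that F(x_1, …, x_k) = 0 whenever some x_j lies in the linear span of x_1, …, x_{j-1}. -/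
/-! Extend `f` to all of `(ℝⁿ)ᵏ` by Tietze, average each coordinate of the extension against
its sign character over the group `{±1}ᵏ` of sign changes to make it equivariant, and multiply
by the Gram determinant `det ⟪x_a, x_b⟫`. The Gram determinant is invariant under sign changes,
equals `1` on orthonormal frames (where the average returns `f`, which is already equivariant)
and vanishes on linearly dependent tuples. -/

/-- The Stiefel manifold predicate: `x` is a `k`-tuple of pairwise orthogonal
unit vectors in `ℝⁿ`. -/
def IsStiefelFrame (n k : ℕ) (x : Fin k → EuclideanSpace ℝ (Fin n)) : Prop :=
  (∀ j, ‖x j‖ = 1) ∧ ∀ i j, i ≠ j → inner ℝ (x i) (x j) = (0 : ℝ)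

def negAt {n k : ℕ} (j : Fin k) (x : Fin k → EuclideanSpace ℝ (Fin n)) :
    Fin k → EuclideanSpace ℝ (Fin n) :=
  Function.update x j (-(x j))

section TwistedAverage

variable {Γ Y : Type*} [Group Γ] [Fintype Γ] [MulAction Γ Y]

/-- Since a `ℤˣ`-valued character satisfies `χ γ⁻¹ = χ γ`, this is the usual projection
`y ↦ |Γ|⁻¹ ∑ γ, χ(γ)⁻¹ g (γ • y)` onto `χ`-equivariant functions. -/
noncomputable def twistedAverage (χ : Γ →* ℤˣ) (g : Y → ℝ) (y : Y) : ℝ :=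
  (Fintype.card Γ : ℝ)⁻¹ * ∑ γ, ((χ γ : ℤ) : ℝ) * g (γ • y)

theorem twistedAverage_smul (χ : Γ →* ℤˣ) (g : Y → ℝ) (γ : Γ) (y : Y) :
    twistedAverage χ g (γ • y) = χ γ * twistedAverage χ g y := by
  have hshift (δ : Γ) : ((χ δ : ℤ) : ℝ) * g (δ • γ • y) =
      χ γ * (((χ (δ * γ) : ℤ) : ℝ) * g ((δ * γ) • y)) := by
    rw [smul_smul, map_mul, mul_comm (χ δ), Units.val_mul, Int.cast_mul, ← mul_assoc,
      ← mul_assoc, ← Int.cast_mul, Int.units_coe_mul_self, Int.cast_one, one_mul]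
  have hreindex : ∑ δ, ((χ (δ * γ) : ℤ) : ℝ) * g ((δ * γ) • y) =
      ∑ δ, ((χ δ : ℤ) : ℝ) * g (δ • y) :=
    Fintype.sum_equiv (Equiv.mulRight γ) _ _ fun _ => rfl
  unfold twistedAverage
  rw [Finset.sum_congr rfl fun δ _ => hshift δ, ← Finset.mul_sum, hreindex]
  ring

theorem twistedAverage_eq_of_forall_smul {χ : Γ →* ℤˣ} {g : Y → ℝ} {y : Y}
    (hg : ∀ γ : Γ, g (γ • y) = χ γ * g y) : twistedAverage χ g y = g y := by
  have hterm (γ : Γ) : ((χ γ : ℤ) : ℝ) * g (γ • y) = g y := by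
    rw [hg, ← mul_assoc, ← Int.cast_mul, Int.units_coe_mul_self, Int.cast_one, one_mul]
  unfold twistedAverage
  simp_rw [hterm, Finset.sum_const, Finset.card_univ, nsmul_eq_mul]
  field_simp

theorem Continuous.twistedAverage [TopologicalSpace Y] [ContinuousConstSMul Γ Y]
    (χ : Γ →* ℤˣ) {g : Y → ℝ} (hg : Continuous g) : Continuous (twistedAverage χ g) := by
  unfold _root_.twistedAverage
  fun_prop

end TwistedAverage

section SignVectors

variable {ι : Type*} [Fintype ι] [DecidableEq ι]

theorem signVector_induction {p : (ι → ℤˣ) → Prop} (one : p 1)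
    (mul : ∀ ε δ, p ε → p δ → p (ε * δ)) (flip : ∀ j, p (Pi.mulSingle j (-1)))
    (ε : ι → ℤˣ) : p ε := by
  rw [← Finset.univ_prod_mulSingle ε]
  refine Finset.prod_induction _ p mul one fun j _ => ?_
  rcases Int.units_eq_one_or (ε j) with h | h <;> rw [h]
  · rwa [Pi.mulSingle_one]
  · exact flip j

def signCharacter (a : ι → ℕ) : (ι → ℤˣ) →* ℤˣ where
  toFun ε := ∏ j, ε j ^ a j
  map_one' := by simp
  map_mul' ε δ := by simp [mul_pow, Finset.prod_mul_distrib]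

theorem signCharacter_mulSingle_neg_one (a : ι → ℕ) (j : ι) :
    signCharacter a (Pi.mulSingle j (-1)) = (-1) ^ a j := by
  refine (Finset.prod_eq_single j (fun l _ hl => ?_) (by simp)).trans (by simp)
  simp [Pi.mulSingle_eq_of_ne hl]

theorem apply_smul_eq_of_apply_mulSingle_smul {Y : Type*} [MulAction (ι → ℤˣ) Y]
    (χ : (ι → ℤˣ) →* ℤˣ) {s : Set Y} (hs : ∀ (ε : ι → ℤˣ), ∀ y ∈ s, ε • y ∈ s) {g : Y → ℝ}
    (hg : ∀ j, ∀ y ∈ s,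
      g ((Pi.mulSingle j (-1) : ι → ℤˣ) • y) = χ (Pi.mulSingle j (-1)) * g y)
    (ε : ι → ℤˣ) : ∀ y ∈ s, g (ε • y) = χ ε * g y := by
  induction ε using signVector_induction with
  | one => simp
  | mul ε δ hε hδ =>
    intro y hy
    rw [mul_smul, hε _ (hs δ y hy), hδ y hy, map_mul, Units.val_mul, Int.cast_mul, mul_assoc]
  | flip j => exact hg j

end SignVectors

section Gram

variable {ι E : Type*} [NormedAddCommGroup E] [InnerProductSpace ℝ E]

theorem continuous_gram : Continuous fun x : ι → E => Matrix.gram ℝ x :=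
  continuous_pi fun i => continuous_pi fun l => (continuous_apply i).inner (continuous_apply l)

theorem isClosed_setOf_orthonormal : IsClosed {x : ι → E | Orthonormal ℝ x} := by
  classical
  simp_rw [← Matrix.gram_eq_one_iff_orthonormal]
  exact isClosed_eq continuous_gram continuous_const

theorem Int.units_smul_eq_cast_smul (u : ℤˣ) (v : E) : u • v = ((u : ℤ) : ℝ) • v := by
  rw [Units.smul_def, Int.cast_smul_eq_zsmul]

theorem Orthonormal.units_smul {x : ι → E} (hx : Orthonormal ℝ x) (ε : ι → ℤˣ) :
    Orthonormal ℝ (ε • x) := by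
  refine ⟨fun j => ?_, fun i j hij => ?_⟩
  · simp [Int.units_smul_eq_cast_smul, norm_smul, hx.1 j, abs_unit_intCast]
  · simp [Int.units_smul_eq_cast_smul, real_inner_smul_left, real_inner_smul_right,
      hx.2 hij]

variable [Fintype ι] [DecidableEq ι]

theorem det_gram_units_smul (ε : ι → ℤˣ) (x : ι → E) :
    (Matrix.gram ℝ (ε • x)).det = (Matrix.gram ℝ x).det := by
  have hgram : Matrix.gram ℝ (ε • x) = Matrix.of fun i l =>
      ((ε i : ℤ) : ℝ) * (Matrix.of fun i l => ((ε l : ℤ) : ℝ) * Matrix.gram ℝ x i l) i l := by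
    ext i l
    simp only [Matrix.gram_apply, Matrix.of_apply, Pi.smul_apply',
      Int.units_smul_eq_cast_smul, real_inner_smul_left, real_inner_smul_right]
    ring
  rw [hgram, Matrix.det_mul_column, Matrix.det_mul_row, ← mul_assoc,
    ← Finset.prod_mul_distrib]
  simp [← Int.cast_mul, Int.units_coe_mul_self]

theorem det_gram_eq_zero_of_mem_span_lt [LinearOrder ι] {x : ι → E} {j : ι}
    (hj : x j ∈ Submodule.span ℝ (x '' {i | i < j})) : (Matrix.gram ℝ x).det = 0 := by
  by_contra hdet
  exact (Matrix.linearIndependent_of_det_gram_ne_zero hdet).notMem_span_image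
    (s := {i | i < j}) (lt_irrefl j) hj

noncomputable def gramTwistedAverage (χ : (ι → ℤˣ) →* ℤˣ) (g : (ι → E) → ℝ) (x : ι → E) : ℝ :=
  (Matrix.gram ℝ x).det * twistedAverage χ g x

theorem Continuous.gramTwistedAverage (χ : (ι → ℤˣ) →* ℤˣ) {g : (ι → E) → ℝ}
    (hg : Continuous g) : Continuous (gramTwistedAverage χ g) :=
  continuous_gram.matrix_det.mul (hg.twistedAverage χ)

theorem gramTwistedAverage_smul (χ : (ι → ℤˣ) →* ℤˣ) (g : (ι → E) → ℝ) (ε : ι → ℤˣ)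
    (x : ι → E) : gramTwistedAverage χ g (ε • x) = χ ε * gramTwistedAverage χ g x := by
  rw [gramTwistedAverage, gramTwistedAverage, det_gram_units_smul, twistedAverage_smul,
    mul_left_comm]

theorem Orthonormal.gramTwistedAverage_eq {χ : (ι → ℤˣ) →* ℤˣ} {g : (ι → E) → ℝ}
    {x : ι → E} (hx : Orthonormal ℝ x) (hg : ∀ ε : ι → ℤˣ, g (ε • x) = χ ε * g x) :
    gramTwistedAverage χ g x = g x := by
  rw [gramTwistedAverage, Matrix.gram_eq_one_iff_orthonormal.mpr hx, Matrix.det_one, one_mul,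
    twistedAverage_eq_of_forall_smul hg]

theorem gramTwistedAverage_eq_zero_of_mem_span_lt [LinearOrder ι] (χ : (ι → ℤˣ) →* ℤˣ)
    (g : (ι → E) → ℝ) {x : ι → E} {j : ι} (hj : x j ∈ Submodule.span ℝ (x '' {i | i < j})) :
    gramTwistedAverage χ g x = 0 := by
  rw [gramTwistedAverage, det_gram_eq_zero_of_mem_span_lt hj, zero_mul]

end Gram

theorem negAt_eq_mulSingle_smul {n k : ℕ} (j : Fin k) (x : Fin k → EuclideanSpace ℝ (Fin n)) :
    negAt j x = (Pi.mulSingle j (-1) : Fin k → ℤˣ) • x := by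
  funext l
  rcases eq_or_ne l j with rfl | hl
  · simp [negAt]
  · simp [negAt, hl]

theorem isStiefelFrame_negAt {n k : ℕ} {x : Fin k → EuclideanSpace ℝ (Fin n)}
    (hx : IsStiefelFrame n k x) (j : Fin k) : IsStiefelFrame n k (negAt j x) := by
  rw [negAt_eq_mulSingle_smul]
  exact Orthonormal.units_smul hx _

theorem IsStiefelFrame.apply_smul_eq {n k m : ℕ} (α : Fin m → Fin k → ZMod 2)
    {g : (Fin k → EuclideanSpace ℝ (Fin n)) → EuclideanSpace ℝ (Fin m)}
    (hg : ∀ x, IsStiefelFrame n k x → ∀ j i, g (negAt j x) i = (-1 : ℝ) ^ (α i j).val * g x i)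
    {x : Fin k → EuclideanSpace ℝ (Fin n)} (hx : IsStiefelFrame n k x) (i : Fin m)
    (ε : Fin k → ℤˣ) : g (ε • x) i = signCharacter (fun j => (α i j).val) ε * g x i := by
  refine apply_smul_eq_of_apply_mulSingle_smul _ (s := {y | IsStiefelFrame n k y})
    (g := fun y => g y i) (fun ε y hy => Orthonormal.units_smul hy ε) (fun j y hy => ?_) ε x hx
  rw [← negAt_eq_mulSingle_smul, signCharacter_mulSingle_neg_one, hg y hy j i]
  push_cast
  rfl

theorem stmt_9_general (n k m : ℕ)
    (α : Fin m → Fin k → ZMod 2)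
    (f : {x : Fin k → EuclideanSpace ℝ (Fin n) // IsStiefelFrame n k x} →
      EuclideanSpace ℝ (Fin m))
    (hf : Continuous f)
    (hequiv : ∀ (x : {x : Fin k → EuclideanSpace ℝ (Fin n) // IsStiefelFrame n k x})
      (j : Fin k) (hx : IsStiefelFrame n k (negAt j x.1)) (i : Fin m),
      f ⟨negAt j x.1, hx⟩ i = (-1 : ℝ) ^ (α i j).val * f x i) :
    ∃ F : {x : Fin k → EuclideanSpace ℝ (Fin n) // ∀ j, ‖x j‖ = 1} →
        EuclideanSpace ℝ (Fin m),
      Continuous F ∧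
      (∀ (x : {x : Fin k → EuclideanSpace ℝ (Fin n) // ∀ j, ‖x j‖ = 1})
        (j : Fin k) (hx : ∀ j', ‖negAt j x.1 j'‖ = 1) (i : Fin m),
        F ⟨negAt j x.1, hx⟩ i = (-1 : ℝ) ^ (α i j).val * F x i) ∧
      (∀ (x : Fin k → EuclideanSpace ℝ (Fin n)) (h₁ : ∀ j, ‖x j‖ = 1)
        (h₂ : IsStiefelFrame n k x), F ⟨x, h₁⟩ = f ⟨x, h₂⟩) ∧
      (∀ x : {x : Fin k → EuclideanSpace ℝ (Fin n) // ∀ j, ‖x j‖ = 1},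
        (∃ j : Fin k, x.1 j ∈ Submodule.span ℝ (x.1 '' {i | i < j})) → F x = 0) := by
  obtain ⟨G, hG⟩ := ContinuousMap.exists_restrict_eq isClosed_setOf_orthonormal
    (⟨f, hf⟩ : C({x | Orthonormal ℝ x}, EuclideanSpace ℝ (Fin m)))
  have hGf (x : Fin k → EuclideanSpace ℝ (Fin n)) (hx : IsStiefelFrame n k x) :
      G x = f ⟨x, hx⟩ :=
    DFunLike.congr_fun hG ⟨x, hx⟩
  have hGneg (x : Fin k → EuclideanSpace ℝ (Fin n)) (hx : IsStiefelFrame n k x) (j : Fin k)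
      (i : Fin m) :
      G (negAt j x) i = (-1 : ℝ) ^ (α i j).val * G x i := by
    have hx' := isStiefelFrame_negAt hx j
    rw [hGf x hx, hGf _ hx', hequiv ⟨x, hx⟩ j hx' i]
  let χ (i : Fin m) := signCharacter fun j => (α i j).val
  have hGcoord (i : Fin m) : Continuous fun y => G y i :=
    (PiLp.continuous_apply 2 _ i).comp G.continuous
  refine ⟨fun x => WithLp.toLp 2 fun i => gramTwistedAverage (χ i) (fun y => G y i) x.1,
    ?_, fun x j hx i => ?_, fun x _ hx => ?_, fun x ⟨j, hj⟩ => ?_⟩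
  · exact ((PiLp.continuous_toLp 2 _).comp (continuous_pi fun i =>
      (hGcoord i).gramTwistedAverage (χ i))).comp continuous_subtype_val
  · show gramTwistedAverage (χ i) (fun y => G y i) (negAt j x.1) = _
    rw [negAt_eq_mulSingle_smul, gramTwistedAverage_smul, signCharacter_mulSingle_neg_one]
    push_cast
    rfl
  · ext i
    rw [← hGf x hx]
    exact Orthonormal.gramTwistedAverage_eq hx (IsStiefelFrame.apply_smul_eq α hGneg hx i)
  · ext i
    exact gramTwistedAverage_eq_zero_of_mem_span_lt _ _ hj

/-- Every continuous map `f : V_{n,k} → ℝ^m` that is `(ℤ/2)^k`-equivariant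
with respect to sign patterns `α_1, …, α_m` extends to a continuous equivariant
map `F : (S^{n-1})^k → ℝ^m` that vanishes whenever some `x_j` lies in the
linear span of `x_1, …, x_{j-1}`. -/
theorem stmt_9 (n k m : ℕ) (hk : 1 ≤ k) (hkn : k ≤ n)
    (α : Fin m → Fin k → ZMod 2)
    (f : {x : Fin k → EuclideanSpace ℝ (Fin n) // IsStiefelFrame n k x} →
      EuclideanSpace ℝ (Fin m))
    (hf : Continuous f)
    (hequiv : ∀ (x : {x : Fin k → EuclideanSpace ℝ (Fin n) // IsStiefelFrame n k x})
      (j : Fin k) (hx : IsStiefelFrame n k (negAt j x.1)) (i : Fin m),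
      f ⟨negAt j x.1, hx⟩ i = (-1 : ℝ) ^ (α i j).val * f x i) :
    ∃ F : {x : Fin k → EuclideanSpace ℝ (Fin n) // ∀ j, ‖x j‖ = 1} →
        EuclideanSpace ℝ (Fin m),
      Continuous F ∧
      (∀ (x : {x : Fin k → EuclideanSpace ℝ (Fin n) // ∀ j, ‖x j‖ = 1})
        (j : Fin k) (hx : ∀ j', ‖negAt j x.1 j'‖ = 1) (i : Fin m),
        F ⟨negAt j x.1, hx⟩ i = (-1 : ℝ) ^ (α i j).val * F x i) ∧
      (∀ (x : Fin k → EuclideanSpace ℝ (Fin n)) (h₁ : ∀ j, ‖x j‖ = 1)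
        (h₂ : IsStiefelFrame n k x), F ⟨x, h₁⟩ = f ⟨x, h₂⟩) ∧
      (∀ x : {x : Fin k → EuclideanSpace ℝ (Fin n) // ∀ j, ‖x j‖ = 1},
        (∃ j : Fin k, x.1 j ∈ Submodule.span ℝ (x.1 '' {i | i < j})) → F x = 0) :=
  stmt_9_general n k m α f hf hequiv
end

section
/- Let 1 ≤ k ≤ n be integers, and let M be the space of all k-tuples (x_1, …, x_k) of pairwise orthogonal unit vectors in ℝ^n such that, for each j ∈ {1, …, k}, the last k - j coordinates of x_j are zero. Suppose there exists a continuous nowhere-zero map f : M → (ℝ^{n-k})^k, with components f = (f_1, …, f_k), such that replacing x_j by -x_j replaces f_j by -f_j and leaves f_i unchanged for i ≠ j. Then there exists a continuous nowhere-zero map F : V_{n,k} → (ℝ^{n-k})^k × ℝ^{k(k-1)/2} such that: the first factor has components F_1, …, F_k with F_j : V_{n,k} → ℝ^{n-k}, and replacing x_j by -x_j replaces F_j by -F_j and leaves F_i unchanged for i ≠ j; the second factor has coordinates indexed by pairs (ℓ, i) with 1 ≤ ℓ ≤ k-1 and 1 ≤ i ≤ k-ℓ, and replacing x_j by -x_j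 negates the coordinate indexed by (ℓ, i) exactly when j = ℓ and leaves it unchanged otherwise. -/
/-- The submanifold `M ⊆ V_{n,k}`: additionally, for each `j` (0-indexed) the
last `k - (j+1)` coordinates of `x j` vanish. -/
def IsFlagFrame (n k : ℕ) (x : Fin k → EuclideanSpace ℝ (Fin n)) : Prop :=
  IsStiefelFrame n k x ∧ ∀ (j : Fin k) (i : Fin n), n - k + j.1 + 1 ≤ i.1 → x j i = 0

open Function

section Symmetrize

variable (G : Type*) {X V : Type*} [Group G] [Fintype G] [MulAction G X] [AddCommMonoid V]
  [DistribMulAction G V]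

def symmetrize (g : X → V) (x : X) : V :=
  ∑ γ : G, γ⁻¹ • g (γ • x)

variable {G}

theorem symmetrize_smul (g : X → V) (δ : G) (x : X) :
    symmetrize G g (δ • x) = δ • symmetrize G g x := by
  simp only [symmetrize, Finset.smul_sum, smul_smul]
  exact Fintype.sum_equiv (Equiv.mulRight δ) _ _ fun γ => by simp [mul_smul]

theorem symmetrize_eq_card_smul {g : X → V} {x : X} (h : ∀ γ : G, g (γ • x) = γ • g x) :
    symmetrize G g x = Fintype.card G • g x := by
  simp [symmetrize, h]

theorem Continuous.symmetrize [TopologicalSpace X] [TopologicalSpace V] [ContinuousConstSMul G X]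
    [ContinuousConstSMul G V] [ContinuousAdd V] {g : X → V} (hg : Continuous g) :
    Continuous (symmetrize G g) :=
  continuous_finsetSum _ fun γ _ => (hg.comp (continuous_const_smul γ)).const_smul γ⁻¹

end Symmetrize

section Signs

variable {ι A B : Type*} [DecidableEq ι] [AddGroup A] [AddGroup B]

theorem Pi.mulSingle_neg_one_smul (j : ι) (x : ι → A) :
    (Pi.mulSingle j (-1) : ι → ℤˣ) • x = update x j (-x j) := by
  funext i
  by_cases h : i = j
  · subst h; simp [Units.smul_def]
  · simp [h]

theorem Pi.smul_mem_and_map_smul_of_mulSingle_neg_one [Finite ι] {s : Set (ι → A)}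
    {g : (ι → A) → ι → B}
    (h : ∀ j, ∀ x ∈ s, (Pi.mulSingle j (-1) : ι → ℤˣ) • x ∈ s ∧
      g ((Pi.mulSingle j (-1) : ι → ℤˣ) • x) = (Pi.mulSingle j (-1) : ι → ℤˣ) • g x)
    (ε : ι → ℤˣ) : ∀ x ∈ s, ε • x ∈ s ∧ g (ε • x) = ε • g x := by
  induction ε using Pi.mulSingle_induction with
  | one => simp
  | mul ε δ hε hδ =>
    intro x hx
    obtain ⟨hδx, hgδ⟩ := hδ x hx
    obtain ⟨hεδx, hgεδ⟩ := hε _ hδx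
    exact ⟨by rwa [mul_smul], by rw [mul_smul, hgεδ, hgδ, mul_smul]⟩
  | mulSingle j u =>
    rcases Int.units_eq_one_or u with rfl | rfl
    · simp
    · exact h j

end Signs

variable {n k : ℕ}

theorem negAt_eq_smul (j : Fin k) (x : Fin k → EuclideanSpace ℝ (Fin n)) :
    negAt j x = (Pi.mulSingle j (-1) : Fin k → ℤˣ) • x :=
  (Pi.mulSingle_neg_one_smul j x).symm

theorem IsFlagFrame.negAt {x : Fin k → EuclideanSpace ℝ (Fin n)} (hx : IsFlagFrame n k x)
    (j : Fin k) : IsFlagFrame n k (negAt j x) := by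
  obtain ⟨⟨hnorm, horth⟩, hzero⟩ := hx
  refine ⟨⟨fun i => ?_, fun i l hil => ?_⟩, fun i m hm => ?_⟩ <;>
    simp only [_root_.negAt, update_apply] <;> split_ifs <;>
    simp_all [inner_neg_left, inner_neg_right]

theorem isClosed_setOf_isFlagFrame : IsClosed {x | IsFlagFrame n k x} := by
  simp only [IsFlagFrame, IsStiefelFrame, Set.ofPred_and, Set.ofPred_forall]
  refine .inter (.inter ?_ ?_) ?_ <;> refine isClosed_iInter fun _ => ?_
  · exact isClosed_eq (by fun_prop) continuous_const
  all_goals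
    refine isClosed_iInter fun _ => isClosed_iInter fun _ => isClosed_eq ?_ continuous_const
  · fun_prop
  · exact (EuclideanSpace.proj _).continuous.comp (continuous_apply _)

/-- The map `h` of the paper: the coordinates of the `x_ℓ` that vanish on `M`. -/
def flagCoords (hkn : k ≤ n) (x : Fin k → EuclideanSpace ℝ (Fin n)) :
    {p : Fin k × Fin k // p.1.1 + p.2.1 + 2 ≤ k} → ℝ :=
  fun p => x p.1.1 ⟨n - k + p.1.1 + 1 + p.1.2, by have := p.2; omega⟩

theorem continuous_flagCoords (hkn : k ≤ n) : Continuous (flagCoords (n := n) hkn) :=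
  continuous_pi fun _ => (EuclideanSpace.proj _).continuous.comp (continuous_apply _)

theorem flagCoords_negAt (hkn : k ≤ n) (j : Fin k) (x : Fin k → EuclideanSpace ℝ (Fin n))
    (p : {p : Fin k × Fin k // p.1.1 + p.2.1 + 2 ≤ k}) :
    flagCoords hkn (negAt j x) p =
      if j = p.1.1 then -flagCoords hkn x p else flagCoords hkn x p := by
  simp only [flagCoords, negAt, update_apply]
  split_ifs with h1 h2 h2 <;> subst_vars <;> simp_all

theorem IsStiefelFrame.isFlagFrame_of_flagCoords_eq_zero (hkn : k ≤ n)
    {x : Fin k → EuclideanSpace ℝ (Fin n)} (hx : IsStiefelFrame n k x)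
    (h0 : flagCoords hkn x = 0) : IsFlagFrame n k x := by
  refine ⟨hx, fun j i hi => ?_⟩
  have hp : j.1 + (i.1 - (n - k + j + 1)) + 2 ≤ k := by omega
  have := congrFun h0 ⟨(j, ⟨i - (n - k + j + 1), by omega⟩), hp⟩
  rwa [show i = ⟨n - k + j + 1 + (i - (n - k + j + 1)), by omega⟩ from Fin.ext (by simp; omega)]

theorem stmt_12_general (n k : ℕ) (hkn : k ≤ n)
    (f : {x : Fin k → EuclideanSpace ℝ (Fin n) // IsFlagFrame n k x} →
      Fin k → EuclideanSpace ℝ (Fin (n - k)))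
    (hf : Continuous f) (hfz : ∀ x, f x ≠ 0)
    (hequiv : ∀ (x : {x : Fin k → EuclideanSpace ℝ (Fin n) // IsFlagFrame n k x})
      (j : Fin k) (hx : IsFlagFrame n k (negAt j x.1)),
      f ⟨negAt j x.1, hx⟩ j = -(f x j) ∧
        ∀ i, i ≠ j → f ⟨negAt j x.1, hx⟩ i = f x i) :
    ∃ F : {x : Fin k → EuclideanSpace ℝ (Fin n) // IsStiefelFrame n k x} →
        (Fin k → EuclideanSpace ℝ (Fin (n - k))) ×
          ({p : Fin k × Fin k // p.1.1 + p.2.1 + 2 ≤ k} → ℝ),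
      Continuous F ∧ (∀ x, F x ≠ 0) ∧
      ∀ (x : {x : Fin k → EuclideanSpace ℝ (Fin n) // IsStiefelFrame n k x})
        (j : Fin k) (hx : IsStiefelFrame n k (negAt j x.1)),
        ((F ⟨negAt j x.1, hx⟩).1 j = -((F x).1 j) ∧
          ∀ i, i ≠ j → (F ⟨negAt j x.1, hx⟩).1 i = (F x).1 i) ∧
        ∀ p : {p : Fin k × Fin k // p.1.1 + p.2.1 + 2 ≤ k},
          (F ⟨negAt j x.1, hx⟩).2 p =
            if j = p.1.1 then -((F x).2 p) else (F x).2 p := by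
  obtain ⟨g, hgf⟩ := ContinuousMap.exists_restrict_eq isClosed_setOf_isFlagFrame ⟨f, hf⟩
  have hg : ∀ x (hx : IsFlagFrame n k x), g x = f ⟨x, hx⟩ :=
    fun x hx => DFunLike.congr_fun hgf ⟨x, hx⟩
  have hg_smul : ∀ (ε : Fin k → ℤˣ) x, IsFlagFrame n k x → g (ε • x) = ε • g x := by
    refine fun ε x hx => (Pi.smul_mem_and_map_smul_of_mulSingle_neg_one
      (s := {x | IsFlagFrame n k x}) (fun j y hy => ?_) ε x hx).2
    have hjy := hy.negAt j
    rw [← negAt_eq_smul, ← negAt_eq_smul, hg _ hjy, hg _ hy]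
    exact ⟨hjy, eq_update_iff.mpr (hequiv ⟨y, hy⟩ j hjy)⟩
  refine ⟨fun x => (symmetrize (Fin k → ℤˣ) g x.1, flagCoords hkn x.1),
    (g.continuous.symmetrize.comp continuous_subtype_val).prodMk
      ((continuous_flagCoords hkn).comp continuous_subtype_val), fun x => ?_,
    fun x j hx => ⟨eq_update_iff.mp ?_, flagCoords_negAt hkn j x.1⟩⟩
  · rw [Ne, Prod.mk_eq_zero, not_and_or]
    by_cases hM : IsFlagFrame n k x.1
    · left
      rw [symmetrize_eq_card_smul (hg_smul · _ hM), hg _ hM, ← Nat.cast_smul_eq_nsmul ℝ]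
      exact smul_ne_zero (by positivity) (hfz _)
    · exact .inr (mt (x.2.isFlagFrame_of_flagCoords_eq_zero hkn) hM)
  · simp only [negAt_eq_smul, symmetrize_smul]
    exact Pi.mulSingle_neg_one_smul j _

/-- If there is a continuous nowhere-zero `(ℤ/2)^k`-equivariant map
`f : M → (ℝ^{n-k})^k`, then there is a continuous nowhere-zero equivariant map
`F : V_{n,k} → (ℝ^{n-k})^k × ℝ^{k(k-1)/2}`, where the coordinates of the
second factor are indexed by pairs `(ℓ, i)` with `1 ≤ ℓ ≤ k-1`, `1 ≤ i ≤ k-ℓ`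
(encoded 0-indexed by pairs `p` with `p.1 + p.2 + 2 ≤ k`), and the coordinate
indexed by `(ℓ, i)` is negated by negating `x_j` exactly when `j = ℓ`. -/
theorem stmt_12 (n k : ℕ) (hk : 1 ≤ k) (hkn : k ≤ n)
    (f : {x : Fin k → EuclideanSpace ℝ (Fin n) // IsFlagFrame n k x} →
      Fin k → EuclideanSpace ℝ (Fin (n - k)))
    (hf : Continuous f) (hfz : ∀ x, f x ≠ 0)
    (hequiv : ∀ (x : {x : Fin k → EuclideanSpace ℝ (Fin n) // IsFlagFrame n k x})
      (j : Fin k) (hx : IsFlagFrame n k (negAt j x.1)),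
      f ⟨negAt j x.1, hx⟩ j = -(f x j) ∧
        ∀ i, i ≠ j → f ⟨negAt j x.1, hx⟩ i = f x i) :
    ∃ F : {x : Fin k → EuclideanSpace ℝ (Fin n) // IsStiefelFrame n k x} →
        (Fin k → EuclideanSpace ℝ (Fin (n - k))) ×
          ({p : Fin k × Fin k // p.1.1 + p.2.1 + 2 ≤ k} → ℝ),
      Continuous F ∧ (∀ x, F x ≠ 0) ∧
      ∀ (x : {x : Fin k → EuclideanSpace ℝ (Fin n) // IsStiefelFrame n k x})
        (j : Fin k) (hx : IsStiefelFrame n k (negAt j x.1)),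
        ((F ⟨negAt j x.1, hx⟩).1 j = -((F x).1 j) ∧
          ∀ i, i ≠ j → (F ⟨negAt j x.1, hx⟩).1 i = (F x).1 i) ∧
        ∀ p : {p : Fin k × Fin k // p.1.1 + p.2.1 + 2 ≤ k},
          (F ⟨negAt j x.1, hx⟩).2 p =
            if j = p.1.1 then -((F x).2 p) else (F x).2 p :=
  stmt_12_general n k hkn f hf hfz hequiv
end
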